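/- arXiv:2111.13814 — 3 statements merged into one kernel-verified Lean document; each statement's English description precedes it below -/
import Mathlib

section
/- In the transition digraph of P_{n,3}, for distinct a,b ∈ [n] there are no walks of length 1, 2, or 3 from (a,b) to (b,a), and exactly (n−2)(n−3) walks of length 4 from (a,b) to (b,a). -/
/-- Vertices of the transition digraph of `P_{n,3}`: ordered pairs of distinct
elements of `[n]`. -/
abbrev TVtx (n : ℕ) := {p : Fin n × Fin n // p.1 ≠ p.2}

/-- Adjacency matrix (over ℕ) of the transition digraph of `P_{n,3}`: there is
an arc from `(a,b)` to `(c,d)` iff `b = c` and `a ≠ d`.  The `(u,v)` entry of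
its `ℓ`-th power is the number of walks of length `ℓ` from `u` to `v`. -/
def adjA (n : ℕ) : Matrix (TVtx n) (TVtx n) ℕ :=
  Matrix.of fun u v => if u.1.2 = v.1.1 ∧ u.1.1 ≠ v.1.2 then 1 else 0

lemma sum_tvtx {n : ℕ} (f : Fin n × Fin n → ℕ) :
    (∑ w : TVtx n, f w.1) = ∑ p : Fin n × Fin n, if p.1 ≠ p.2 then f p else 0 := by
  rw [← Finset.sum_filter]
  exact (Finset.sum_subtype _ (fun x => by simp) f).symm

lemma adjA_sq {n : ℕ} (u v : TVtx n) :
    (adjA n ^ 2) u v =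
      if v.1.1 ≠ u.1.1 ∧ v.1.1 ≠ u.1.2 ∧ u.1.2 ≠ v.1.2 then 1 else 0 := by
  rw [pow_two, Matrix.mul_apply]
  simp only [adjA, Matrix.of_apply]
  rw [sum_tvtx (fun p : Fin n × Fin n =>
        (if u.1.2 = p.1 ∧ u.1.1 ≠ p.2 then 1 else 0) *
        (if p.2 = v.1.1 ∧ p.1 ≠ v.1.2 then 1 else 0))]
  rw [Fintype.sum_prod_type]
  simp only [mul_ite, mul_one, mul_zero, ite_and]
  rw [Finset.sum_eq_single u.1.2]
  · rw [Finset.sum_eq_single v.1.1]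
    · have := u.2; have := v.2
      split_ifs <;> simp_all <;> tauto
    · intro y _ hy
      split_ifs <;> simp_all
    · simp
  · intro x _ hx
    exact Finset.sum_eq_zero (fun y _ => by split_ifs <;> simp_all)
  · simp

lemma count2 {n : ℕ} (a b : Fin n) (hab : a ≠ b) :
    (Finset.univ.filter fun x : Fin n => x ≠ a ∧ x ≠ b).card = n - 2 := by
  have h : (Finset.univ.filter fun x : Fin n => x ≠ a ∧ x ≠ b)
      = ({a, b} : Finset (Fin n))ᶜ := by
    ext x; simp [not_or]
  rw [h, Finset.card_compl, Fintype.card_fin,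
    Finset.card_insert_of_notMem (by simp [hab]), Finset.card_singleton]

lemma count3 {n : ℕ} (a b x : Fin n) (hab : a ≠ b) (hxa : x ≠ a) (hxb : x ≠ b) :
    (∑ y : Fin n, if y ≠ a ∧ y ≠ b ∧ y ≠ x then (1 : ℕ) else 0) = n - 3 := by
  rw [Finset.sum_ite, Finset.sum_const, Finset.sum_const, smul_eq_mul, mul_one,
    smul_eq_mul, mul_zero, add_zero]
  have h : (Finset.univ.filter fun y : Fin n => y ≠ a ∧ y ≠ b ∧ y ≠ x)
      = ({a, b, x} : Finset (Fin n))ᶜ := by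
    ext y; simp [not_or]
  rw [h, Finset.card_compl, Fintype.card_fin]
  rw [Finset.card_insert_of_notMem (by simp [hab, Ne.symm hxa]),
    Finset.card_insert_of_notMem (by simp [Ne.symm hxb]), Finset.card_singleton]

theorem walks_ab_ba (n : ℕ) (a b : Fin n) (hab : a ≠ b) :
    ((adjA n) ^ 1) ⟨(a, b), hab⟩ ⟨(b, a), hab.symm⟩ = 0 ∧
    ((adjA n) ^ 2) ⟨(a, b), hab⟩ ⟨(b, a), hab.symm⟩ = 0 ∧
    ((adjA n) ^ 3) ⟨(a, b), hab⟩ ⟨(b, a), hab.symm⟩ = 0 ∧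
    ((adjA n) ^ 4) ⟨(a, b), hab⟩ ⟨(b, a), hab.symm⟩ = (n - 2) * (n - 3) := by
  refine ⟨?_, ?_, ?_, ?_⟩
  · simp [adjA]
  · rw [adjA_sq]; simp
  · rw [show (3 : ℕ) = 2 + 1 from rfl, pow_add, pow_one, Matrix.mul_apply]
    apply Finset.sum_eq_zero
    intro w _
    rw [adjA_sq]
    simp only [adjA, Matrix.of_apply]
    split_ifs <;> simp_all
  · rw [show (4 : ℕ) = 2 + 2 from rfl, pow_add, Matrix.mul_apply]
    simp only [adjA_sq]
    rw [sum_tvtx (fun p : Fin n × Fin n =>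
        (if p.1 ≠ a ∧ p.1 ≠ b ∧ b ≠ p.2 then 1 else 0) *
        (if b ≠ p.1 ∧ b ≠ p.2 ∧ p.2 ≠ a then 1 else 0))]
    rw [Fintype.sum_prod_type]
    have key : ∀ x y : Fin n,
        (if (x, y).1 ≠ (x, y).2 then
          (if x ≠ a ∧ x ≠ b ∧ b ≠ y then 1 else 0) *
          (if b ≠ x ∧ b ≠ y ∧ y ≠ a then (1 : ℕ) else 0) else 0)
        = (if x ≠ a ∧ x ≠ b then 1 else 0) *
          (if y ≠ a ∧ y ≠ b ∧ y ≠ x then 1 else 0) := by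
      intro x y
      split_ifs <;> simp_all <;> tauto
    simp only [key]
    have step : ∀ x : Fin n,
        (∑ y : Fin n, (if x ≠ a ∧ x ≠ b then 1 else 0) *
          (if y ≠ a ∧ y ≠ b ∧ y ≠ x then (1 : ℕ) else 0))
        = if x ≠ a ∧ x ≠ b then n - 3 else 0 := by
      intro x
      rw [← Finset.mul_sum]
      by_cases hx : x ≠ a ∧ x ≠ b
      · rw [if_pos hx, if_pos hx, one_mul, count3 a b x hab hx.1 hx.2]
      · rw [if_neg hx, if_neg hx, zero_mul]
    simp only [step]
    rw [Finset.sum_ite, Finset.sum_const, Finset.sum_const, smul_eq_mul,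
      smul_eq_mul, mul_zero, add_zero, count2 a b hab]
end

section
/- In the transition digraph of P_{n,3}, for pairwise distinct a,b,c ∈ [n], the number of walks of length 3 from (a,b) to (a,c) equals n−3, and the number of walks of length 4 from (a,b) to (a,c) equals (n−3)². -/
/-- Extension of `adjA` by zero to all ordered pairs. -/
def Bmat (n : ℕ) : Matrix (Fin n × Fin n) (Fin n × Fin n) ℕ :=
  Matrix.of fun p q =>
    if p.1 ≠ p.2 ∧ q.1 ≠ q.2 ∧ p.2 = q.1 ∧ p.1 ≠ q.2 then 1 else 0

lemma mul_indicator (P Q : Prop) [Decidable P] [Decidable Q] :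
    (if P then (1:ℕ) else 0) * (if Q then 1 else 0) = if P ∧ Q then 1 else 0 := by
  split_ifs <;> simp_all

lemma adjA_eq_Bmat {n : ℕ} (P Q : TVtx n) : adjA n P Q = Bmat n P.1 Q.1 := by
  simp [adjA, Bmat, P.2, Q.2]

lemma sum_tvtx_s8 {n : ℕ} (F : Fin n × Fin n → ℕ) :
    ∑ u : TVtx n, F u.1 =
      ∑ p ∈ Finset.univ.filter (fun p : Fin n × Fin n => p.1 ≠ p.2), F p :=
  (Finset.sum_subtype _ (by simp) F).symm

lemma adjA_pow {n : ℕ} : ∀ k, ∀ P Q : TVtx n,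
    (adjA n ^ (k + 1)) P Q = (Bmat n ^ (k + 1)) P.1 Q.1 := by
  intro k
  induction k with
  | zero => intro P Q; simpa using adjA_eq_Bmat P Q
  | succ k ih =>
    intro P Q
    rw [pow_succ, pow_succ (Bmat n), Matrix.mul_apply, Matrix.mul_apply]
    have h1 : ∑ u : TVtx n, (adjA n ^ (k+1)) P u * adjA n u Q
        = ∑ u : TVtx n, (Bmat n ^ (k+1)) P.1 u.1 * Bmat n u.1 Q.1 := by
      refine Finset.sum_congr rfl fun u _ => ?_
      rw [ih P u, adjA_eq_Bmat]
    rw [h1, sum_tvtx_s8 (fun p => (Bmat n ^ (k+1)) P.1 p * Bmat n p Q.1),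
      Finset.sum_filter]
    refine Finset.sum_congr rfl fun p _ => ?_
    by_cases hp : p.1 ≠ p.2
    · simp [hp]
    · have : Bmat n p Q.1 = 0 := by simp [Bmat, hp]
      simp [hp, this]

lemma Bmat_sq {n : ℕ} (p q : Fin n × Fin n) :
    (Bmat n ^ 2) p q =
      if p.1 ≠ p.2 ∧ q.1 ≠ q.2 ∧ p.2 ≠ q.1 ∧ p.1 ≠ q.1 ∧ p.2 ≠ q.2 then 1
      else 0 := by
  rw [sq, Matrix.mul_apply]
  rw [Finset.sum_eq_single (p.2, q.1)]
  · show (if _ then _ else _) * (if _ then _ else _) = _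
    rw [mul_indicator]
    refine if_congr ?_ rfl rfl
    constructor
    · rintro ⟨⟨h1, h2, -, h4⟩, ⟨-, g2, -, g4⟩⟩
      exact ⟨h1, g2, h2, h4, g4⟩
    · rintro ⟨h1, h2, h3, h4, h5⟩
      exact ⟨⟨h1, h3, rfl, h4⟩, ⟨h3, h2, rfl, h5⟩⟩
  · intro r _ hr
    show (if _ then _ else _) * (if _ then _ else _) = 0
    rw [mul_indicator]
    rw [if_neg]
    rintro ⟨⟨-, -, h3, -⟩, ⟨-, -, g3, -⟩⟩
    exact hr (Prod.ext h3.symm g3)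
  · simp

lemma count3_s8 {n : ℕ} (u v w : Fin n) (huv : u ≠ v) (huw : u ≠ w) (hvw : v ≠ w) :
    (Finset.univ.filter (fun x : Fin n => x ≠ u ∧ x ≠ v ∧ x ≠ w)).card = n - 3 := by
  have h : Finset.univ.filter (fun x : Fin n => x ≠ u ∧ x ≠ v ∧ x ≠ w)
      = Finset.univ \ {u, v, w} := by
    ext x; simp
  rw [h, Finset.card_sdiff_of_subset (Finset.subset_univ _)]
  have h3 : ({u, v, w} : Finset (Fin n)).card = 3 := by
    rw [Finset.card_insert_of_notMem (by simp [huv, huw]),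
      Finset.card_insert_of_notMem (by simp [hvw]), Finset.card_singleton]
  simp [h3]

lemma sum_indicator {n : ℕ} (P : Fin n → Prop) [DecidablePred P] :
    ∑ x : Fin n, (if P x then (1:ℕ) else 0) = (Finset.univ.filter P).card := by
  rw [Finset.sum_ite, Finset.sum_const, Finset.sum_const]
  simp

theorem walks_ab_ac (n : ℕ) (a b c : Fin n) (hab : a ≠ b) (hac : a ≠ c)
    (hbc : b ≠ c) :
    ((adjA n) ^ 3) ⟨(a, b), hab⟩ ⟨(a, c), hac⟩ = n - 3 ∧
    ((adjA n) ^ 4) ⟨(a, b), hab⟩ ⟨(a, c), hac⟩ = (n - 3) ^ 2 := by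
  constructor
  · have e3 : ((adjA n) ^ 3) ⟨(a, b), hab⟩ ⟨(a, c), hac⟩
        = (Bmat n ^ 3) (a, b) (a, c) := adjA_pow 2 _ _
    rw [e3, pow_succ, Matrix.mul_apply, Fintype.sum_prod_type]
    have h1 : ∀ x : Fin n,
        ∑ y : Fin n, (Bmat n ^ 2) (a, b) (x, y) * Bmat n (x, y) (a, c)
          = if x ≠ a ∧ x ≠ b ∧ x ≠ c then 1 else 0 := by
      intro x
      rw [Finset.sum_eq_single a]
      · rw [Bmat_sq]
        show (if _ then _ else _) * (if _ then _ else _) = _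
        rw [mul_indicator]
        refine if_congr ?_ rfl rfl
        constructor
        · rintro ⟨⟨-, h2, h3, -, -⟩, ⟨-, -, -, g4⟩⟩
          exact ⟨h2, h3.symm, g4⟩
        · rintro ⟨h1, h2, h3⟩
          exact ⟨⟨hab, h1, h2.symm, h1.symm, hab.symm⟩,
            ⟨h1, hac, rfl, h3⟩⟩
      · intro y _ hy
        have : Bmat n (x, y) (a, c) = 0 := by
          simp only [Bmat, Matrix.of_apply]
          rw [if_neg]; rintro ⟨-, -, h, -⟩; exact hy h
        rw [this, mul_zero]
      · simp
    rw [Finset.sum_congr rfl fun x _ => h1 x, sum_indicator,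
      count3_s8 a b c hab hac hbc]
  · have e4 : ((adjA n) ^ 4) ⟨(a, b), hab⟩ ⟨(a, c), hac⟩
        = (Bmat n ^ 4) (a, b) (a, c) := adjA_pow 3 _ _
    have hp : (Bmat n) ^ 4 = (Bmat n) ^ 2 * (Bmat n) ^ 2 := by
      rw [← pow_add]
    rw [e4, hp, Matrix.mul_apply, Fintype.sum_prod_type, Finset.sum_comm]
    have point : ∀ x y : Fin n,
        (Bmat n ^ 2) (a, b) (x, y) * (Bmat n ^ 2) (x, y) (a, c)
          = if (y ≠ a ∧ y ≠ b ∧ y ≠ c) ∧ (x ≠ a ∧ x ≠ b ∧ x ≠ y) then 1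
            else 0 := by
      intro x y
      rw [Bmat_sq, Bmat_sq, mul_indicator]
      refine if_congr ?_ rfl rfl
      constructor
      · rintro ⟨⟨-, h2, h3, h4, h5⟩, ⟨-, -, g3, g4, g5⟩⟩
        exact ⟨⟨g3, h5.symm, g5⟩, ⟨g4, h3.symm, h2⟩⟩
      · rintro ⟨⟨hy1, hy2, hy3⟩, ⟨hx1, hx2, hx3⟩⟩
        exact ⟨⟨hab, hx3, hx2.symm, hx1.symm, hy2.symm⟩,
          ⟨hx3, hac, hy1, hx1, hy3⟩⟩
    have h2 : ∀ y : Fin n,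
        ∑ x : Fin n, (Bmat n ^ 2) (a, b) (x, y) * (Bmat n ^ 2) (x, y) (a, c)
          = if y ≠ a ∧ y ≠ b ∧ y ≠ c then n - 3 else 0 := by
      intro y
      by_cases hy : y ≠ a ∧ y ≠ b ∧ y ≠ c
      · rw [if_pos hy]
        calc ∑ x : Fin n, (Bmat n ^2) (a,b) (x,y) * (Bmat n ^2) (x,y) (a,c)
            = ∑ x : Fin n, if x ≠ a ∧ x ≠ b ∧ x ≠ y then 1 else 0 := by
              refine Finset.sum_congr rfl fun x _ => ?_
              rw [point x y, if_congr (and_iff_right hy) rfl rfl]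
          _ = n - 3 := by
              rw [sum_indicator, count3_s8 a b y hab hy.1.symm hy.2.1.symm]
      · rw [if_neg hy]
        refine Finset.sum_eq_zero fun x _ => ?_
        rw [point x y, if_neg fun h => hy h.1]
    rw [Finset.sum_congr rfl fun y _ => h2 y]
    rw [Finset.sum_ite, Finset.sum_const, Finset.sum_const,
      count3_s8 a b c hab hac hbc]
    simp [sq]
end

section
/- In the transition digraph of P_{n,3}, for pairwise distinct a,b,c ∈ [n], the number of walks of length 4 from (a,b) to (b,c) equals (n−3)² + (n−2), and there are no walks of length 2 or 3 from (a,b) to (b,c). -/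
/-- The square of the adjacency matrix is again a 0/1 matrix, with an explicit
description of where the 1 entries are. -/
lemma sq_apply (n : ℕ) (u v : TVtx n) :
    ((adjA n) ^ 2) u v =
      if u.1.2 ≠ v.1.1 ∧ u.1.1 ≠ v.1.1 ∧ u.1.2 ≠ v.1.2 then 1 else 0 := by
  rw [sq, Matrix.mul_apply]
  by_cases h : u.1.2 = v.1.1
  · rw [if_neg (by tauto)]
    refine Finset.sum_eq_zero fun w _ => ?_
    simp only [adjA, Matrix.of_apply]
    by_cases h1 : u.1.2 = w.1.1 ∧ u.1.1 ≠ w.1.2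
    · have h2 : ¬(w.1.2 = v.1.1 ∧ w.1.1 ≠ v.1.2) :=
        fun h2 => w.2 (h1.1.symm.trans (h.trans h2.1.symm))
      rw [if_pos h1, if_neg h2, mul_zero]
    · rw [if_neg h1, zero_mul]
  · rw [Finset.sum_eq_single (⟨(u.1.2, v.1.1), h⟩ : TVtx n)]
    · by_cases h1 : u.1.1 = v.1.1 <;> by_cases h2 : u.1.2 = v.1.2 <;>
        simp [adjA, h, h1, h2]
    · intro w _ hw
      simp only [adjA, Matrix.of_apply]
      by_cases h1 : u.1.2 = w.1.1 ∧ u.1.1 ≠ w.1.2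
      · have h2 : ¬(w.1.2 = v.1.1 ∧ w.1.1 ≠ v.1.2) :=
          fun h2 => hw (Subtype.ext (Prod.ext h1.1.symm h2.1))
        rw [if_pos h1, if_neg h2, mul_zero]
      · rw [if_neg h1, zero_mul]
    · intro h'; exact absurd (Finset.mem_univ _) h'

/-- Summing the indicator of "avoid the finite set `t`" over `Fin n` gives
`n - t.card`. -/
lemma indicator_sum (n : ℕ) (t : Finset (Fin n)) (P : Fin n → Prop) [DecidablePred P]
    (h : ∀ y, P y ↔ y ∉ t) :
    (∑ y : Fin n, if P y then 1 else 0) = n - t.card := by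
  have : (∑ y : Fin n, if P y then 1 else 0) = tᶜ.card := by
    rw [Finset.card_eq_sum_ones, ← Finset.sum_filter]
    congr 1
    ext y
    simp [h]
  rw [this, Finset.card_compl, Fintype.card_fin]

theorem walks_ab_bc (n : ℕ) (a b c : Fin n) (hab : a ≠ b) (hac : a ≠ c)
    (hbc : b ≠ c) :
    ((adjA n) ^ 2) ⟨(a, b), hab⟩ ⟨(b, c), hbc⟩ = 0 ∧
    ((adjA n) ^ 3) ⟨(a, b), hab⟩ ⟨(b, c), hbc⟩ = 0 ∧
    ((adjA n) ^ 4) ⟨(a, b), hab⟩ ⟨(b, c), hbc⟩ = (n - 3) ^ 2 + (n - 2) := by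
  refine ⟨?_, ?_, ?_⟩
  · rw [sq_apply]; simp
  · rw [pow_succ, Matrix.mul_apply]
    refine Finset.sum_eq_zero fun w _ => ?_
    by_cases h1 : w.1.2 = b ∧ w.1.1 ≠ c
    · rw [sq_apply]
      rw [if_neg (by simp [h1.1]), zero_mul]
    · have : adjA n w ⟨(b, c), hbc⟩ = 0 := by
        simp only [adjA, Matrix.of_apply]
        rw [if_neg (by exact h1)]
      rw [this, mul_zero]
  · have h4 : (adjA n) ^ 4 = (adjA n) ^ 2 * (adjA n) ^ 2 := by
      rw [← pow_add]
    rw [h4, Matrix.mul_apply]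
    have hterm : ∀ w : TVtx n,
        ((adjA n) ^ 2) ⟨(a, b), hab⟩ w * ((adjA n) ^ 2) w ⟨(b, c), hbc⟩ =
        if (b ≠ w.1.1 ∧ a ≠ w.1.1 ∧ b ≠ w.1.2) ∧
           (w.1.2 ≠ b ∧ w.1.1 ≠ b ∧ w.1.2 ≠ c) then 1 else 0 := by
      intro w
      rw [sq_apply, sq_apply]
      by_cases h1 : b ≠ w.1.1 ∧ a ≠ w.1.1 ∧ b ≠ w.1.2 <;>
        by_cases h2 : w.1.2 ≠ b ∧ w.1.1 ≠ b ∧ w.1.2 ≠ c <;>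
        simp [h1, h2]
    rw [Finset.sum_congr rfl (fun w _ => hterm w)]
    have hsub : (∑ w : TVtx n,
        if (b ≠ w.1.1 ∧ a ≠ w.1.1 ∧ b ≠ w.1.2) ∧
           (w.1.2 ≠ b ∧ w.1.1 ≠ b ∧ w.1.2 ≠ c) then 1 else 0) =
        ∑ p : Fin n × Fin n, if p.1 ≠ p.2 ∧ ((b ≠ p.1 ∧ a ≠ p.1 ∧ b ≠ p.2) ∧
           (p.2 ≠ b ∧ p.1 ≠ b ∧ p.2 ≠ c)) then 1 else 0 := by
      rw [← Finset.sum_subtype (Finset.univ.filter (fun p : Fin n × Fin n => p.1 ≠ p.2))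
        (by simp) (fun p => if (b ≠ p.1 ∧ a ≠ p.1 ∧ b ≠ p.2) ∧
           (p.2 ≠ b ∧ p.1 ≠ b ∧ p.2 ≠ c) then 1 else 0)]
      rw [Finset.sum_filter]
      refine Finset.sum_congr rfl fun p _ => ?_
      by_cases hp : p.1 ≠ p.2 <;> simp [hp]
    rw [hsub, Fintype.sum_prod_type]
    have hinner : ∀ x : Fin n,
        (∑ y : Fin n, if x ≠ y ∧ ((b ≠ x ∧ a ≠ x ∧ b ≠ y) ∧
            (y ≠ b ∧ x ≠ b ∧ y ≠ c)) then 1 else 0) =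
        (if x ∉ ({a, b, c} : Finset (Fin n)) then n - 3 else 0) +
        (if x = c then n - 2 else 0) := by
      intro x
      by_cases hxa : x = a
      · simp [hxa, hac]
      · by_cases hxb : x = b
        · simp [hxb, hbc]
        · by_cases hxc : x = c
          · rw [indicator_sum n ({b, c} : Finset (Fin n)) _ (fun y => by
              constructor
              · rintro ⟨h1, ⟨-, -, h2⟩, -, -, h3⟩
                simp only [Finset.mem_insert, Finset.mem_singleton, not_or]
                exact ⟨Ne.symm h2, h3⟩
              · intro hy
                simp only [Finset.mem_insert, Finset.mem_singleton, not_or] at hy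
                exact ⟨hxc ▸ (Ne.symm hy.2), ⟨hxc ▸ hbc, hxc ▸ hac, Ne.symm hy.1⟩,
                  hy.1, hxc ▸ (Ne.symm hbc), hy.2⟩)]
            have hc2 : ({b, c} : Finset (Fin n)).card = 2 := by
              rw [Finset.card_insert_of_notMem (by simp [hbc]), Finset.card_singleton]
            rw [hc2]
            simp [hxc]
          · rw [indicator_sum n ({x, b, c} : Finset (Fin n)) _ (fun y => by
              constructor
              · rintro ⟨h1, ⟨-, -, h2⟩, -, -, h3⟩
                simp only [Finset.mem_insert, Finset.mem_singleton, not_or]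
                exact ⟨Ne.symm h1, Ne.symm h2, h3⟩
              · intro hy
                simp only [Finset.mem_insert, Finset.mem_singleton, not_or] at hy
                exact ⟨Ne.symm hy.1, ⟨Ne.symm hxb, Ne.symm hxa, Ne.symm hy.2.1⟩,
                  hy.2.1, hxb, hy.2.2⟩)]
            have hc3 : ({x, b, c} : Finset (Fin n)).card = 3 := by
              rw [Finset.card_insert_of_notMem (by simp [hxb, hxc]),
                Finset.card_insert_of_notMem (by simp [hbc]), Finset.card_singleton]
            rw [hc3]
            simp [hxa, hxb, hxc]
    rw [Finset.sum_congr rfl (fun x _ => hinner x), Finset.sum_add_distrib]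
    have hcard : ({a, b, c} : Finset (Fin n)).card = 3 := by
      rw [Finset.card_insert_of_notMem (by simp [hab, hac]),
        Finset.card_insert_of_notMem (by simp [hbc]), Finset.card_singleton]
    have h1 : (∑ x : Fin n, if x ∉ ({a, b, c} : Finset (Fin n)) then n - 3 else 0)
        = (n - 3) ^ 2 := by
      have : ∀ x : Fin n, (if x ∉ ({a, b, c} : Finset (Fin n)) then n - 3 else 0) =
          (n - 3) * (if x ∉ ({a, b, c} : Finset (Fin n)) then 1 else 0) := by
        intro x; by_cases hx : x ∉ ({a, b, c} : Finset (Fin n)) <;> simp [hx]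
      rw [Finset.sum_congr rfl (fun x _ => this x), ← Finset.mul_sum,
        indicator_sum n ({a, b, c} : Finset (Fin n)) _ (fun y => Iff.rfl), hcard, sq]
    have h2 : (∑ x : Fin n, if x = c then n - 2 else 0) = n - 2 := by
      simp
    rw [h1, h2]
end
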